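/- There exists a constant C > 0, independent of N, such that for every N ≥ 1, Σ_{k=1}^N ω_k e^{t_k²} < C N^{3/2}, where t_1 > … > t_N are the zeros of the Hermite polynomial H_N and ω_k are the Gauss–Hermite weights. -/

import Mathlib

open Real MeasureTheory Finset Nat

/-- Physicist's Hermite polynomial via the Rodrigues formula. -/
noncomputable def hermiteH (n : ℕ) (t : ℝ) : ℝ :=
  (-1 : ℝ) ^ n * Real.exp (t ^ 2) * iteratedDeriv n (fun s => Real.exp (-s ^ 2)) t

/-- Gauss–Hermite weight at a node `x` (a zero of `H_N`):
`ω = 2^{N+1} N! √π / (H_{N+1}(x))²`. -/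
noncomputable def ghWeight (N : ℕ) (x : ℝ) : ℝ :=
  2 ^ (N + 1) * (N ! : ℝ) * Real.sqrt π / (hermiteH (N + 1) x) ^ 2

section HpSection

open Polynomial Filter

noncomputable def Hp : ℕ → ℝ[X]
  | 0 => 1
  | (n+1) => C 2 * X * Hp n - derivative (Hp n)



lemma gauss_hasDerivAt (t : ℝ) :
    HasDerivAt (fun s : ℝ => Real.exp (-s ^ 2)) (-2*t*Real.exp (-t^2)) t := by
  have h : HasDerivAt (fun s : ℝ => -s ^ 2) (-(2*t)) t := by
    simpa using ((hasDerivAt_pow 2 t).fun_neg)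
  simpa [mul_comm, mul_assoc, mul_left_comm] using h.exp

lemma gauss_iteratedDeriv (n : ℕ) (t : ℝ) :
    iteratedDeriv n (fun s : ℝ => Real.exp (-s ^ 2)) t
      = (-1)^n * Real.exp (-t^2) * (Hp n).eval t := by
  induction n generalizing t with
  | zero => simp [Hp]
  | succ n ih =>
    rw [iteratedDeriv_succ]
    have hd : ∀ s : ℝ, HasDerivAt (iteratedDeriv n (fun s : ℝ => Real.exp (-s ^ 2)))
        ((-1)^(n+1) * Real.exp (-s^2) * (Hp (n+1)).eval s) s := by
      intro s
      have h1 : HasDerivAt (fun u : ℝ => (-1:ℝ)^n * Real.exp (-u^2) * (Hp n).eval u)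
          ((-1)^n * ((-2*s*Real.exp (-s^2)) * (Hp n).eval s
            + Real.exp (-s^2) * (Hp n).derivative.eval s)) s := by
        have := ((gauss_hasDerivAt s).mul ((Hp n).hasDerivAt s)).const_mul ((-1:ℝ)^n)
        simpa [mul_assoc] using this
      have h2 : HasDerivAt (iteratedDeriv n (fun s : ℝ => Real.exp (-s ^ 2)))
          ((-1)^n * ((-2*s*Real.exp (-s^2)) * (Hp n).eval s
            + Real.exp (-s^2) * (Hp n).derivative.eval s)) s := by
        apply h1.congr_of_eventuallyEq
        filter_upwards with u using (ih u)
      convert h2 using 1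
      show _ = _
      rw [show Hp (n+1) = C 2 * X * Hp n - derivative (Hp n) from rfl]
      simp [pow_succ]
      ring
    rw [(hd t).deriv]

lemma hermiteH_eval (n : ℕ) (t : ℝ) : hermiteH n t = (Hp n).eval t := by
  rw [hermiteH, gauss_iteratedDeriv]
  rw [show (-1:ℝ)^n * Real.exp (t^2) * ((-1)^n * Real.exp (-t^2) * (Hp n).eval t)
    = ((-1)^n)^2 * (Real.exp (t^2) * Real.exp (-t^2)) * (Hp n).eval t by ring]
  rw [← Real.exp_add]
  simp [← pow_mul, pow_mul']


lemma Hp_succ (n : ℕ) : Hp (n+1) = C 2 * X * Hp n - derivative (Hp n) := rfl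

lemma Hp_derivative (n : ℕ) : derivative (Hp (n+1)) = C (2*(n+1) : ℝ) * Hp n := by
  induction n with
  | zero => simp [Hp]
  | succ n ih =>
    rw [Hp_succ (n+1), derivative_sub, ih]
    apply Polynomial.funext
    intro t
    have h := congrArg (eval t) (Hp_succ n)
    have hih := congrArg (eval t) ih
    simp only [derivative_mul, derivative_C, derivative_X, eval_add, eval_sub, eval_mul,
      eval_C, eval_X, eval_one, eval_zero, zero_mul, one_mul, mul_one, zero_add] at h hih ⊢
    push_cast at h hih ⊢
    linear_combination (2*t)*hih - (2*((n:ℝ)+1))*h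

lemma Hp_natDegree_le (n : ℕ) : (Hp n).natDegree ≤ n := by
  induction n with
  | zero => simp [Hp]
  | succ n ih =>
    rw [Hp_succ]
    refine le_trans (natDegree_sub_le _ _) ?_
    simp only [max_le_iff]
    constructor
    · calc (C (2:ℝ) * X * Hp n).natDegree ≤ (C (2:ℝ) * X).natDegree + (Hp n).natDegree :=
        natDegree_mul_le
      _ ≤ 1 + n := by
          gcongr
          exact le_trans natDegree_mul_le (by simp)
      _ = n + 1 := by ring
    · exact le_trans (natDegree_derivative_le _) (by omega)

lemma Hp_coeff (n : ℕ) : (Hp n).coeff n = 2^n := by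
  induction n with
  | zero => simp [Hp]
  | succ n ih =>
    rw [Hp_succ, coeff_sub]
    have h1 : (C (2:ℝ) * X * Hp n).coeff (n+1) = 2 * (Hp n).coeff n := by
      rw [mul_assoc, coeff_C_mul, coeff_X_mul]
    have h2 : (derivative (Hp n)).coeff (n+1) = 0 := by
      apply coeff_eq_zero_of_natDegree_lt
      exact lt_of_le_of_lt (natDegree_derivative_le _) (by have := Hp_natDegree_le n; omega)
    rw [h1, h2, ih]; ring

lemma Hp_ne_zero (n : ℕ) : Hp n ≠ 0 := fun h => by
  have h2 := Hp_coeff n; rw [h] at h2; simp at h2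
  exact absurd h2.symm (by positivity)

lemma Hp_natDegree (n : ℕ) : (Hp n).natDegree = n := by
  refine le_antisymm (Hp_natDegree_le n) ?_
  exact le_natDegree_of_ne_zero (by rw [Hp_coeff]; positivity)

lemma Hp_leadingCoeff (n : ℕ) : (Hp n).leadingCoeff = 2^n := by
  rw [leadingCoeff, Hp_natDegree, Hp_coeff]

lemma Hp_rec (n : ℕ) : Hp (n+2) = C 2 * X * Hp (n+1) - C (2*(n+1) : ℝ) * Hp n := by
  rw [Hp_succ (n+1), Hp_derivative]

lemma Hp_eval_neg (n : ℕ) (t : ℝ) : (Hp n).eval (-t) = (-1)^n * (Hp n).eval t := by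
  induction n using Nat.twoStepInduction generalizing t with
  | zero => simp [Hp]
  | one => norm_num [Hp]
  | more n ih1 ih2 =>
    have h1 := congrArg (eval (-t)) (Hp_rec n)
    have h2 := congrArg (eval t) (Hp_rec n)
    simp only [eval_sub, eval_mul, eval_C, eval_X] at h1 h2
    rw [h1, h2, ih1, ih2]
    ring

lemma Hp_eval_zero_even (m : ℕ) :
    (Hp (2*m)).eval 0 = (-1)^m * ((2*m)! : ℝ) / (m ! : ℝ) := by
  induction m with
  | zero => simp [Hp]
  | succ m ih =>
    have h := congrArg (eval 0) (Hp_rec (2*m))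
    simp only [eval_sub, eval_mul, eval_C, eval_X, mul_zero, zero_mul, zero_sub] at h
    have e : 2 * (m+1) = (2*m) + 2 := by ring
    rw [e, h, ih]
    have hm : (m ! : ℝ) ≠ 0 := by positivity
    have hfac : ((2*m+2)! : ℝ) = (2*(m:ℝ)+2) * ((2*(m:ℝ)+1) * ((2*m)! : ℝ)) := by
      rw [show 2*m+2 = (2*m+1)+1 by ring]
      push_cast [Nat.factorial_succ]
      ring
    have hfac2 : ((m+1)! : ℝ) = ((m:ℝ)+1) * (m ! : ℝ) := by push_cast [Nat.factorial_succ]; ring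
    rw [hfac, hfac2]
    push_cast
    field_simp
    ring

lemma Hp_eval_zero_odd (m : ℕ) : (Hp (2*m+1)).eval 0 = 0 := by
  have h := Hp_eval_neg (2*m+1) 0
  simp only [neg_zero, pow_succ, pow_mul] at h
  norm_num at h
  linarith



lemma Hp_ODE (n : ℕ) (x : ℝ) :
    (derivative (derivative (Hp n))).eval x
      = 2 * x * (derivative (Hp n)).eval x - (2*n : ℝ) * (Hp n).eval x := by
  have h1 : derivative (Hp (n+1)) = C 2 * Hp n + C 2 * X * derivative (Hp n)
      - derivative (derivative (Hp n)) := by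
    rw [Hp_succ n, derivative_sub, derivative_mul, derivative_mul]
    simp only [derivative_C, derivative_X, zero_mul, zero_add, mul_one]
  have h2 := congrArg (eval x) (h1.symm.trans (Hp_derivative n))
  simp only [eval_add, eval_sub, eval_mul, eval_C, eval_X] at h2
  push_cast at h2
  linarith

/-- the weighted Hermite function and its derivative -/
noncomputable def uH (n : ℕ) (x : ℝ) : ℝ := Real.exp (-x^2/2) * (Hp n).eval x

noncomputable def wH (n : ℕ) (x : ℝ) : ℝ :=
  Real.exp (-x^2/2) * ((derivative (Hp n)).eval x - x * (Hp n).eval x)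

lemma expw_hasDerivAt (x : ℝ) :
    HasDerivAt (fun s : ℝ => Real.exp (-s^2/2)) (-x * Real.exp (-x^2/2)) x := by
  have h : HasDerivAt (fun s : ℝ => -s ^ 2/2) (-x) x := by
    have := ((hasDerivAt_pow 2 x).neg).div_const 2
    simpa using this.congr_deriv (by push_cast; ring)
  simpa [mul_comm] using h.exp

lemma uH_hasDerivAt (n : ℕ) (x : ℝ) : HasDerivAt (uH n) (wH n x) x := by
  have h := (expw_hasDerivAt x).mul ((Hp n).hasDerivAt x)
  apply h.congr_deriv
  rw [wH]; ring

lemma wH_hasDerivAt (n : ℕ) (x : ℝ) :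
    HasDerivAt (wH n) ((x^2 - (2*n+1)) * uH n x) x := by
  have hg' := ((derivative (Hp n)).hasDerivAt x).fun_sub
      ((hasDerivAt_id x).fun_mul ((Hp n).hasDerivAt x))
  have hg : HasDerivAt (fun s : ℝ => (derivative (Hp n)).eval s - s * (Hp n).eval s)
      ((derivative (derivative (Hp n))).eval x
        - ((Hp n).eval x + x * (derivative (Hp n)).eval x)) x := by
    simpa using hg'
  have h := (expw_hasDerivAt x).mul hg
  apply h.congr_deriv
  rw [Hp_ODE, uH]
  ring

lemma roots_mem {N : ℕ} (hN : 1 ≤ N) (t : Fin N → ℝ) (ht : StrictAnti t)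
    (hz : ∀ j, (Hp N).eval (t j) = 0) {x : ℝ} (hx : (Hp N).eval x = 0) :
    ∃ j, x = t j := by
  classical
  have hsub : Finset.image t Finset.univ ⊆ (Hp N).roots.toFinset := by
    intro y hy
    simp only [Finset.mem_image] at hy
    obtain ⟨j, _, rfl⟩ := hy
    rw [Multiset.mem_toFinset, mem_roots (Hp_ne_zero N)]
    exact hz j
  have hcard : (Hp N).roots.toFinset.card ≤ N := by
    calc (Hp N).roots.toFinset.card ≤ Multiset.card (Hp N).roots :=
      (Hp N).roots.toFinset_card_le
    _ ≤ (Hp N).natDegree := (Hp N).card_roots'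
    _ = N := Hp_natDegree N
  have himg : (Finset.image t Finset.univ).card = N := by
    rw [Finset.card_image_of_injective _ ht.injective, Finset.card_univ, Fintype.card_fin]
  have heq : Finset.image t Finset.univ = (Hp N).roots.toFinset :=
    Finset.eq_of_subset_of_card_le hsub (by omega)
  have hxmem : x ∈ (Hp N).roots.toFinset := by
    rw [Multiset.mem_toFinset, mem_roots (Hp_ne_zero N)]; exact hx
  rw [← heq] at hxmem
  simp only [Finset.mem_image] at hxmem
  obtain ⟨j, _, hj⟩ := hxmem
  exact ⟨j, hj.symm⟩

lemma pos_beyond {N : ℕ} (hN : 1 ≤ N) {r : ℝ}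
    (hroots : ∀ y : ℝ, (Hp N).eval y = 0 → y ≤ r) :
    ∀ x, r < x → 0 < (Hp N).eval x := by
  intro x hx
  by_contra hle
  push_neg at hle
  have htop : Tendsto (fun y => (Hp N).eval y) atTop atTop := by
    apply Polynomial.tendsto_atTop_of_leadingCoeff_nonneg
    · rw [Polynomial.degree_eq_natDegree (Hp_ne_zero N), Hp_natDegree]
      exact_mod_cast hN
    · rw [Hp_leadingCoeff]; positivity
  obtain ⟨b, hb⟩ := (htop.eventually_ge_atTop 1).exists_forall_of_atTop
  set c := max b (x+1) with hc
  have hcx : x ≤ c := le_trans (by linarith) (le_max_right _ _)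
  have hcpos : (1:ℝ) ≤ (Hp N).eval c := hb c (le_max_left _ _)
  have : ∃ y ∈ Set.Icc x c, (Hp N).eval y = 0 := by
    have := intermediate_value_Icc hcx ((Hp N).continuousOn (s := Set.Icc x c))
    have h0 : (0:ℝ) ∈ Set.Icc ((Hp N).eval x) ((Hp N).eval c) := ⟨hle, by linarith⟩
    obtain ⟨y, hy1, hy2⟩ := this h0
    exact ⟨y, hy1, hy2⟩
  obtain ⟨y, hy1, hy2⟩ := this
  have := hroots y hy2
  have : r < y := lt_of_lt_of_le hx hy1.1
  linarith [hroots y hy2]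

lemma uH_tendsto (n : ℕ) : Tendsto (uH n) atTop (nhds 0) := by
  have h1 : Tendsto (fun x => (Hp n).eval x / Real.exp x) atTop (nhds 0) :=
    Polynomial.tendsto_div_exp_atTop (Hp n)
  have h2 : Tendsto (fun x : ℝ => Real.exp (x - x^2/2)) atTop (nhds 0) := by
    apply Real.tendsto_exp_atBot.comp
    refine tendsto_atBot_mono' atTop ?_ tendsto_neg_atTop_atBot
    filter_upwards [eventually_ge_atTop (4:ℝ)] with x hx
    show x - x^2/2 ≤ -x
    nlinarith
  have h3 := h1.mul h2
  rw [mul_zero] at h3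
  apply h3.congr
  intro x
  rw [uH, show x - x^2/2 = -x^2/2 + x by ring, Real.exp_add]
  field_simp [Real.exp_ne_zero]

lemma root_bound {N : ℕ} (hN : 1 ≤ N) {r : ℝ} (hr : (Hp N).eval r = 0)
    (hpos : ∀ x, r < x → 0 < (Hp N).eval x) : r ≤ Real.sqrt (2*N+1) := by
  by_contra hs
  push_neg at hs
  have hs0 : (0:ℝ) ≤ Real.sqrt (2*N+1) := Real.sqrt_nonneg _
  have hNn : (0:ℝ) ≤ 2*N+1 := by positivity
  have hdiffu : ∀ x, HasDerivAt (uH N) (wH N x) x := uH_hasDerivAt N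
  have hdu : Differentiable ℝ (uH N) := fun x => (hdiffu x).differentiableAt
  have hcontu : Continuous (uH N) := hdu.continuous
  have hdiffw : ∀ x, HasDerivAt (wH N) ((x^2 - (2*N+1)) * uH N x) x := by
    intro x; exact_mod_cast wH_hasDerivAt N x
  have hdw : Differentiable ℝ (wH N) := fun x => (hdiffw x).differentiableAt
  have hcontw : Continuous (wH N) := hdw.continuous
  have hur : uH N r = 0 := by rw [uH, hr, mul_zero]
  have hupos : ∀ x, r < x → 0 < uH N x := fun x hx => by
    rw [uH]; exact mul_pos (Real.exp_pos _) (hpos x hx)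
  -- Step 1 : some point a with positive derivative of u
  have step1 : ∃ a, a ∈ Set.Ioo r (r+2) ∧ 0 < wH N a := by
    by_contra hnp
    push_neg at hnp
    have hanti : AntitoneOn (uH N) (Set.Icc r (r+2)) := by
      apply antitoneOn_of_deriv_nonpos (convex_Icc _ _) hcontu.continuousOn
      · exact fun x _ => (hdiffu x).differentiableAt.differentiableWithinAt
      · intro x hx
        rw [interior_Icc] at hx
        rw [(hdiffu x).deriv]
        exact hnp x hx
    have h1 : uH N (r+1) ≤ uH N r :=
      hanti (Set.mem_Icc.2 ⟨le_refl r, by linarith⟩)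
        (Set.mem_Icc.2 ⟨by linarith, by linarith⟩) (by linarith)
    have h2 := hupos (r+1) (by linarith)
    rw [hur] at h1
    linarith
  obtain ⟨a, ha, hwa⟩ := step1
  have hra : r < a := ha.1
  -- Step 2 : w is monotone on [a, ∞)
  have step2 : MonotoneOn (wH N) (Set.Ici a) := by
    apply monotoneOn_of_deriv_nonneg (convex_Ici _) hcontw.continuousOn
    · exact fun x _ => (hdiffw x).differentiableAt.differentiableWithinAt
    · intro x hx
      rw [interior_Ici] at hx
      rw [(hdiffw x).deriv]
      have hxr : r < x := lt_trans hra hx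
      have hx0 : Real.sqrt (2*N+1) < x := lt_trans hs hxr
      have : 2*(N:ℝ)+1 < x^2 := by
        have := Real.sq_sqrt hNn
        nlinarith
      have := hupos x hxr
      nlinarith
  -- Step 3 : u is monotone on [a, ∞)
  have step3 : MonotoneOn (uH N) (Set.Ici a) := by
    apply monotoneOn_of_deriv_nonneg (convex_Ici _) hcontu.continuousOn
    · exact fun x _ => (hdiffu x).differentiableAt.differentiableWithinAt
    · intro x hx
      rw [interior_Ici] at hx
      rw [(hdiffu x).deriv]
      have := step2 (Set.mem_Ici.2 (le_refl a)) (Set.mem_Ici.2 hx.le) hx.le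
      linarith
  have hua : 0 < uH N a := hupos a hra
  -- Step 4 : contradiction with u → 0
  have hev : ∀ᶠ x in atTop, uH N x < uH N a :=
    Filter.Tendsto.eventually_lt_const hua (uH_tendsto N)
  obtain ⟨x, hx1, hx2⟩ := (hev.and (eventually_ge_atTop a)).exists
  have := step3 (Set.mem_Ici.2 (le_refl a)) (Set.mem_Ici.2 hx2) hx2
  linarith

lemma node_sq_bound {N : ℕ} (hN : 1 ≤ N) (t : Fin N → ℝ) (ht : StrictAnti t)
    (hz : ∀ j, (Hp N).eval (t j) = 0) : ∀ j, (t j)^2 ≤ 2*N+1 := by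
  intro j
  set r := t ⟨0, by omega⟩ with hrdef
  have hmax : ∀ y : ℝ, (Hp N).eval y = 0 → y ≤ r := by
    intro y hy
    obtain ⟨i, rfl⟩ := roots_mem hN t ht hz hy
    have : (⟨0, by omega⟩ : Fin N) ≤ i := by
      exact Fin.mk_le_of_le_val (Nat.zero_le _)
    exact ht.antitone this
  have hrb : r ≤ Real.sqrt (2*N+1) :=
    root_bound hN (hz _) (pos_beyond hN hmax)
  have h1 : t j ≤ Real.sqrt (2*N+1) := le_trans (hmax _ (hz j)) hrb
  have h2 : -(t j) ≤ Real.sqrt (2*N+1) := by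
    refine le_trans (hmax _ ?_) hrb
    rw [Hp_eval_neg, hz j, mul_zero]
  have := Real.sq_sqrt (show (0:ℝ) ≤ 2*N+1 by positivity)
  nlinarith [Real.sqrt_nonneg (2*(N:ℝ)+1)]



noncomputable def E0 (N : ℕ) : ℝ :=
  ((Hp (N+1)).eval 0)^2 + (2*((N:ℝ)+1) * ((Hp N).eval 0))^2 / (2*N+3)

lemma E0_nonneg (N : ℕ) : 0 ≤ E0 N := by
  rw [E0]; positivity

lemma sonin_nonneg {N : ℕ} {x : ℝ} (hx0 : 0 ≤ x) (hx2 : x^2 ≤ 2*N+1)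
    (hroot : (Hp N).eval x = 0) :
    2/(2*(N:ℝ)+3) * E0 N ≤ Real.exp (-x^2) * ((Hp (N+1)).eval x)^2 := by
  set M := N + 1 with hM
  set q : ℝ := 2*(N:ℝ)+3 with hq
  set E : ℝ → ℝ := fun y => (uH M y)^2 + (wH M y)^2 / (q - y^2) with hE
  have hgap : ∀ y ∈ Set.Icc 0 x, 2 ≤ q - y^2 := by
    rintro y ⟨hy0, hyx⟩
    have : y^2 ≤ x^2 := by nlinarith
    simp only [hq]
    nlinarith
  have hEderiv : ∀ y, q - y^2 ≠ 0 →
      HasDerivAt E (2*y*(wH M y)^2/(q - y^2)^2) y := by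
    intro y hne
    have h1 : HasDerivAt (fun s => (uH M s)^2) (2 * uH M y * wH M y) y := by
      simpa using (uH_hasDerivAt M y).fun_pow 2
    have h2 : HasDerivAt (fun s : ℝ => q - s^2) (-(2*y)) y := by
      simpa using (hasDerivAt_pow 2 y).const_sub q
    have h3 := h2.fun_inv hne
    have h4 : HasDerivAt (fun s => (wH M s)^2) (2 * wH M y * ((y^2 - (2*M:ℝ)-1) * uH M y)) y := by
      have := (wH_hasDerivAt M y).fun_pow 2
      simpa [mul_assoc, sub_sub] using this
    have h5 := h4.mul h3
    have h6 := h1.add h5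
    apply h6.congr_deriv
    have hMq : (2*(M:ℝ)+1) = q := by rw [hq, hM]; push_cast; ring
    have : (y^2 - (2*M:ℝ)-1) = -(q - y^2) := by rw [← hMq]; ring
    rw [this]
    field_simp
    ring
  have hdiffE : ∀ y ∈ Set.Icc 0 x, q - y^2 ≠ 0 := fun y hy => by
    have := hgap y hy; linarith
  have hmono : MonotoneOn E (Set.Icc 0 x) := by
    apply monotoneOn_of_deriv_nonneg (convex_Icc _ _)
    · intro y hy
      exact (hEderiv y (hdiffE y hy)).differentiableAt.continuousAt.continuousWithinAt
    · intro y hy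
      rw [interior_Icc] at hy
      exact (hEderiv y (hdiffE y (Set.mem_Icc_of_Ioo hy))).differentiableAt.differentiableWithinAt
    · intro y hy
      rw [interior_Icc] at hy
      rw [(hEderiv y (hdiffE y (Set.mem_Icc_of_Ioo hy))).deriv]
      have hy0 : 0 < y := hy.1
      positivity
  have hE0x : E 0 ≤ E x := by
    apply hmono (Set.mem_Icc.2 ⟨le_refl 0, hx0⟩) (Set.mem_Icc.2 ⟨hx0, le_refl x⟩) hx0
  -- compute E 0
  have hEzero : E 0 = E0 N := by
    simp only [hE, E0, uH, wH]
    rw [Hp_derivative N]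
    norm_num
    rw [hM, hq]
  -- compute E x
  have hwx : wH M x = -x * uH M x := by
    rw [wH, uH, hM, Hp_derivative N]
    simp [hroot]
    ring
  have hgx : 2 ≤ q - x^2 := hgap x (Set.mem_Icc.2 ⟨hx0, le_refl x⟩)
  have hEx : E x = (uH M x)^2 * q / (q - x^2) := by
    rw [hE]
    simp only
    rw [hwx]
    field_simp
    ring
  have hu2 : (uH M x)^2 = Real.exp (-x^2) * ((Hp (N+1)).eval x)^2 := by
    rw [uH, mul_pow, sq (Real.exp _), ← Real.exp_add]
    norm_num
    rw [hM]
  rw [← hu2]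
  have hqpos : 0 < q := by rw [hq]; positivity
  have hU : 0 ≤ (uH M x)^2 := sq_nonneg _
  have h7 : E0 N ≤ (uH M x)^2 * q / (q - x^2) := by
    rw [← hEzero, ← hEx]; exact hE0x
  have h8 : E0 N * (q - x^2) ≤ (uH M x)^2 * q :=
    (le_div_iff₀ (by linarith)).mp h7
  rw [div_mul_eq_mul_div, div_le_iff₀ hqpos]
  nlinarith [E0_nonneg N]


lemma four_pow_le_sqrt_mul_centralBinom (m : ℕ) (hm : 1 ≤ m) :
    (4:ℝ)^m ≤ 2 * Real.sqrt m * (centralBinom m : ℝ) := by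
  induction m with
  | zero => omega
  | succ m ih =>
    rcases Nat.eq_or_lt_of_le hm with h1 | h2
    · simp [← h1, centralBinom]
      norm_num [Nat.choose]
    · have hm1 : 1 ≤ m := by omega
      have ih := ih hm1
      have hCBpos : (0:ℝ) < (centralBinom m : ℝ) := by
        exact_mod_cast Nat.centralBinom_pos m
      have hrec : ((m:ℝ)+1) * (centralBinom (m+1) : ℝ) = 2*(2*(m:ℝ)+1) * (centralBinom m : ℝ) := by
        exact_mod_cast congrArg (Nat.cast : ℕ → ℝ) (Nat.succ_mul_centralBinom_succ m)
      have hsq : 2 * Real.sqrt m * ((m:ℝ)+1) ≤ (2*(m:ℝ)+1) * Real.sqrt ((m:ℝ)+1) := by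
        have h1 : (0:ℝ) ≤ 2 * Real.sqrt m * ((m:ℝ)+1) := by positivity
        have h2 : (0:ℝ) ≤ (2*(m:ℝ)+1) * Real.sqrt ((m:ℝ)+1) := by positivity
        have hsm : Real.sqrt m ^ 2 = (m:ℝ) := Real.sq_sqrt (by positivity)
        have hsm1 : Real.sqrt ((m:ℝ)+1) ^ 2 = ((m:ℝ)+1) := Real.sq_sqrt (by positivity)
        have key : (2 * Real.sqrt m * ((m:ℝ)+1))^2 ≤ ((2*(m:ℝ)+1) * Real.sqrt ((m:ℝ)+1))^2 := by
          rw [mul_pow, mul_pow, mul_pow, hsm1, hsm]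
          nlinarith [Nat.cast_nonneg (α := ℝ) m]
        exact (pow_le_pow_iff_left₀ h1 h2 (by norm_num)).mp key
      have hm1pos : (0:ℝ) < (m:ℝ)+1 := by positivity
      -- target : 4^(m+1) ≤ 2 √(m+1) CB(m+1)
      rw [pow_succ]
      have hCB1 : (centralBinom (m+1) : ℝ) = 2*(2*(m:ℝ)+1) * (centralBinom m : ℝ) / ((m:ℝ)+1) := by
        field_simp
        linarith [hrec]
      rw [hCB1]
      push_cast
      rw [← mul_div_assoc, le_div_iff₀ hm1pos]
      calc (4:ℝ)^m * 4 * ((m:ℝ)+1) ≤ (2 * Real.sqrt m * (centralBinom m : ℝ)) * 4 * ((m:ℝ)+1) := by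
            gcongr
        _ = (2 * Real.sqrt m * ((m:ℝ)+1)) * (4 * (centralBinom m : ℝ)) := by ring
        _ ≤ ((2*(m:ℝ)+1) * Real.sqrt ((m:ℝ)+1)) * (4 * (centralBinom m : ℝ)) := by
            gcongr
        _ = 2 * Real.sqrt ((m:ℝ)+1) * (2*(2*(m:ℝ)+1) * (centralBinom m : ℝ)) := by ring

lemma factorial_eq_centralBinom (m : ℕ) :
    ((2*m)! : ℝ) = (centralBinom m : ℝ) * (m ! : ℝ)^2 := by
  have h : centralBinom m * (m ! * m !) = (2*m)! := by
    rw [Nat.centralBinom]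
    have h2 : 2*m - m = m := by omega
    calc (2*m).choose m * (m ! * m !) = (2*m).choose m * m ! * m ! := by ring
      _ = (2*m).choose m * m ! * (2*m - m)! := by rw [h2]
      _ = (2*m)! := Nat.choose_mul_factorial_mul_factorial (by omega)
  rw [← h]
  push_cast
  ring

lemma E0_even (m : ℕ) :
    E0 (2*m) = 4*(2*(m:ℝ)+1)^2 * ((centralBinom m : ℝ)^2 * (m ! : ℝ)^2) / (2*(2*(m:ℝ))+3) := by
  have hodd : (Hp (2*m+1)).eval 0 = 0 := Hp_eval_zero_odd m
  have heven : (Hp (2*m)).eval 0 = (-1)^m * ((2*m)! : ℝ) / (m ! : ℝ) := Hp_eval_zero_even m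
  have hm : (m ! : ℝ) ≠ 0 := by positivity
  rw [E0, hodd, heven, factorial_eq_centralBinom]
  push_cast
  field_simp
  ring_nf
  simp only [mul_comm _ 2, pow_mul, neg_one_sq, one_pow]
  ring_nf

lemma E0_odd (m : ℕ) :
    E0 (2*m+1) = (centralBinom (m+1) : ℝ)^2 * ((m+1)! : ℝ)^2 := by
  have hodd : (Hp (2*m+1)).eval 0 = 0 := Hp_eval_zero_odd m
  have heven : (Hp (2*(m+1))).eval 0 = (-1)^(m+1) * ((2*(m+1))! : ℝ) / ((m+1)! : ℝ) :=
    Hp_eval_zero_even (m+1)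
  have hm : ((m+1)! : ℝ) ≠ 0 := by positivity
  have h2 : 2*m+1+1 = 2*(m+1) := by ring
  rw [E0, h2, hodd, heven, factorial_eq_centralBinom]
  field_simp
  ring_nf
  simp only [mul_comm _ 2, pow_mul, neg_one_sq, one_pow]
  ring_nf

lemma E0_pos (N : ℕ) : 0 < E0 N := by
  rcases Nat.even_or_odd N with ⟨m, hm⟩ | ⟨m, hm⟩
  · have : N = 2*m := by omega
    rw [this, E0_even]
    have h1 : (0:ℝ) < (centralBinom m : ℝ) := by exact_mod_cast Nat.centralBinom_pos m
    have h2 : (0:ℝ) < (m ! : ℝ) := by positivity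
    positivity
  · rw [hm, E0_odd]
    have h1 : (0:ℝ) < (centralBinom (m+1) : ℝ) := by exact_mod_cast Nat.centralBinom_pos (m+1)
    have h2 : (0:ℝ) < ((m+1)! : ℝ) := by positivity
    positivity

lemma sqrt_pi_le_two : Real.sqrt π ≤ 2 := by
  rw [show (2:ℝ) = Real.sqrt 4 by
    rw [show (4:ℝ) = 2^2 by norm_num, Real.sqrt_sq (by norm_num)]]
  exact Real.sqrt_le_sqrt (by linarith [Real.pi_le_four])

lemma term_bound {N : ℕ} (hN : 1 ≤ N) :
    Real.sqrt π * 2^N * (N ! : ℝ) * (2*(N:ℝ)+3) ≤ 11 * Real.sqrt N * E0 N := by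
  rcases Nat.even_or_odd N with ⟨m, hmN⟩ | ⟨m, hmN⟩
  · -- even case, N = 2m, m ≥ 1
    have hNm : N = 2*m := by omega
    subst hNm
    have hm1 : 1 ≤ m := by omega
    have hCBpos : (0:ℝ) < (centralBinom m : ℝ) := by exact_mod_cast Nat.centralBinom_pos m
    have hfacpos : (0:ℝ) < (m ! : ℝ) := by positivity
    have hq : (0:ℝ) < 2*(2*(m:ℝ))+3 := by positivity
    rw [E0_even, ← mul_div_assoc, le_div_iff₀ hq]
    have h2N : (2:ℝ)^(2*m) = 4^m := by rw [pow_mul]; norm_num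
    push_cast
    rw [h2N, factorial_eq_centralBinom]
    have key : Real.sqrt π * 4^m * (2*(2*(m:ℝ))+3)^2 ≤ 44 * Real.sqrt (2*m) * (2*(m:ℝ)+1)^2 * (centralBinom m : ℝ) := by
      have hsqm : Real.sqrt m ≤ Real.sqrt (2*m) := Real.sqrt_le_sqrt (by push_cast; linarith [Nat.cast_nonneg (α := ℝ) m])
      calc Real.sqrt π * 4^m * (2*(2*(m:ℝ))+3)^2
          ≤ 2 * (2 * Real.sqrt m * (centralBinom m : ℝ)) * (2*(2*(m:ℝ))+3)^2 := by
            gcongr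
            · exact sqrt_pi_le_two
            · exact four_pow_le_sqrt_mul_centralBinom m hm1
        _ ≤ 2 * (2 * Real.sqrt (2*m) * (centralBinom m : ℝ)) * (9*(2*(m:ℝ)+1)^2) := by
            gcongr
            nlinarith [Nat.one_le_cast (α := ℝ) |>.mpr hm1]
        _ ≤ 44 * Real.sqrt (2*m) * (2*(m:ℝ)+1)^2 * (centralBinom m : ℝ) := by
            nlinarith [mul_nonneg (mul_nonneg (Real.sqrt_nonneg (2*(m:ℝ))) hCBpos.le)
              (sq_nonneg (2*(m:ℝ)+1))]
    have hmul := mul_le_mul_of_nonneg_right key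
      (show (0:ℝ) ≤ (centralBinom m : ℝ) * (m ! : ℝ)^2 by positivity)
    nlinarith [hmul]
  · -- odd case, N = 2m+1, k = m+1
    have hNm : N = 2*m+1 := hmN
    subst hNm
    set k := m+1 with hk
    have hCBpos : (0:ℝ) < (centralBinom k : ℝ) := by exact_mod_cast Nat.centralBinom_pos k
    have hfacpos : (0:ℝ) < (k ! : ℝ) := by positivity
    rw [E0_odd]
    have h2N : (2:ℝ)^(2*m+1) * 2 = 4^k := by
      rw [hk, pow_succ, pow_mul]; norm_num; ring
    have hfac : ((2*m+1)! : ℝ) * (2*(k:ℝ)) = ((2*k)! : ℝ) := by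
      have : (2*k) ! = (2*k) * (2*m+1)! := by
        rw [show 2*k = (2*m+1)+1 by omega, Nat.factorial_succ]
      rw [this]
      push_cast
      ring
    have hq : (2*(2*(m:ℝ)+1)+3) = 4*(k:ℝ)+1 := by rw [hk]; push_cast; ring
    have key : Real.sqrt π * 4^k * (4*(k:ℝ)+1) ≤ 44 * (k:ℝ) * Real.sqrt (2*m+1) * (centralBinom k : ℝ) := by
      have hk1 : (1:ℝ) ≤ (k:ℝ) := by exact_mod_cast Nat.le_add_left 1 m
      have hsqk : Real.sqrt k ≤ Real.sqrt (2*m+1) := by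
        apply Real.sqrt_le_sqrt
        rw [hk]; push_cast; linarith [Nat.cast_nonneg (α := ℝ) m]
      calc Real.sqrt π * 4^k * (4*(k:ℝ)+1)
          ≤ 2 * (2 * Real.sqrt k * (centralBinom k : ℝ)) * (4*(k:ℝ)+1) := by
            gcongr
            · exact sqrt_pi_le_two
            · exact four_pow_le_sqrt_mul_centralBinom k (by omega)
        _ ≤ 2 * (2 * Real.sqrt (2*m+1) * (centralBinom k : ℝ)) * (11*(k:ℝ)) := by
            gcongr
            linarith
        _ = 44 * (k:ℝ) * Real.sqrt (2*m+1) * (centralBinom k : ℝ) := by ring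
    -- reduce goal by multiplying by 4k
    have hkpos : (0:ℝ) < (k:ℝ) := by positivity
    have goal4k : Real.sqrt π * 2^(2*m+1) * ((2*m+1)! : ℝ) * (2*(2*(m:ℝ)+1)+3) * (4*(k:ℝ))
        ≤ 11 * Real.sqrt (2*m+1) * ((centralBinom k : ℝ)^2 * (k ! : ℝ)^2) * (4*(k:ℝ)) := by
      have lhs_eq : Real.sqrt π * 2^(2*m+1) * ((2*m+1)! : ℝ) * (2*(2*(m:ℝ)+1)+3) * (4*(k:ℝ))
          = Real.sqrt π * (4:ℝ)^k * ((2*k)! : ℝ) * (4*(k:ℝ)+1) := by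
        rw [← h2N, ← hfac, hq]; ring
      rw [lhs_eq, factorial_eq_centralBinom k]
      calc Real.sqrt π * (4:ℝ)^k * ((centralBinom k : ℝ) * (k ! : ℝ)^2) * (4*(k:ℝ)+1)
          = (Real.sqrt π * 4^k * (4*(k:ℝ)+1)) * ((centralBinom k : ℝ) * (k ! : ℝ)^2) := by ring
        _ ≤ (44 * (k:ℝ) * Real.sqrt (2*m+1) * (centralBinom k : ℝ)) * ((centralBinom k : ℝ) * (k ! : ℝ)^2) := by
            apply mul_le_mul_of_nonneg_right key (by positivity)
        _ = 11 * Real.sqrt (2*m+1) * ((centralBinom k : ℝ)^2 * (k ! : ℝ)^2) * (4*(k:ℝ)) := by ring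
    have h4k : (0:ℝ) < 4*(k:ℝ) := by positivity
    have := (mul_le_mul_iff_left₀ h4k).mp goal4k
    push_cast at this ⊢
    convert this using 2 <;> push_cast <;> ring


lemma sonin {N : ℕ} {x : ℝ} (hx2 : x^2 ≤ 2*N+1) (hroot : (Hp N).eval x = 0) :
    2/(2*(N:ℝ)+3) * E0 N ≤ Real.exp (-x^2) * ((Hp (N+1)).eval x)^2 := by
  rcases le_or_gt 0 x with h | h
  · exact sonin_nonneg h hx2 hroot
  · have h0 : (0:ℝ) ≤ -x := by linarith
    have hx2' : (-x)^2 ≤ 2*N+1 := by rwa [neg_sq]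
    have hroot' : (Hp N).eval (-x) = 0 := by rw [Hp_eval_neg, hroot, mul_zero]
    have hs := sonin_nonneg h0 hx2' hroot'
    rw [neg_sq, Hp_eval_neg, mul_pow, ← pow_mul, mul_comm (N+1) 2, pow_mul, neg_one_sq,
      one_pow, one_mul] at hs
    exact hs

lemma per_term {N : ℕ} (hN : 1 ≤ N) {x : ℝ} (hx2 : x^2 ≤ 2*N+1)
    (hroot : (Hp N).eval x = 0) :
    ghWeight N x * Real.exp (x^2) ≤ 11 * Real.sqrt N := by
  set q : ℝ := 2*(N:ℝ)+3 with hqdef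
  have hqpos : (0:ℝ) < q := by rw [hqdef]; positivity
  have hD := sonin hx2 hroot
  set P : ℝ := (Hp (N+1)).eval x with hPdef
  set D : ℝ := Real.exp (-x^2) * P^2 with hDdef
  have hdpos : 0 < 2/q * E0 N := by
    have := E0_pos N
    positivity
  have hDpos : 0 < D := lt_of_lt_of_le hdpos hD
  have hP2 : P^2 = Real.exp (x^2) * D := by
    rw [hDdef, ← mul_assoc, ← Real.exp_add]
    norm_num
  have hexpr : ghWeight N x * Real.exp (x^2) = 2^(N+1) * (N ! : ℝ) * Real.sqrt π / D := by
    rw [ghWeight, hermiteH_eval, ← hPdef, hP2]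
    field_simp [hDpos.ne']
  rw [hexpr]
  have h1 : 2^(N+1)*(N ! :ℝ)*Real.sqrt π / D ≤ 2^(N+1)*(N ! :ℝ)*Real.sqrt π / (2/q * E0 N) :=
    div_le_div_of_nonneg_left (by positivity) hdpos hD
  refine le_trans h1 ?_
  rw [div_le_iff₀ hdpos]
  have htb := term_bound hN
  have hrw : 11 * Real.sqrt N * (2/q * E0 N) = 2 * (11 * Real.sqrt N * E0 N) / q := by
    ring
  rw [hrw, le_div_iff₀ hqpos, pow_succ]
  calc 2^N * 2 * (N ! : ℝ) * Real.sqrt π * q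
      = 2 * (Real.sqrt π * 2^N * (N ! : ℝ) * q) := by ring
    _ ≤ 2 * (11 * Real.sqrt N * E0 N) := by
        have h2 : Real.sqrt π * 2^N * (N ! : ℝ) * q ≤ 11 * Real.sqrt N * E0 N := by
          rw [hqdef]; exact htb
        linarith

end HpSection

/-- there is a constant `C > 0`, independent of `N`, with
`Σ_{k=1}^N ω_k e^{t_k²} < C N^{3/2}` for all `N ≥ 1`. -/
theorem stmt11 :
    ∃ C : ℝ, 0 < C ∧ ∀ N : ℕ, 1 ≤ N → ∀ t : Fin N → ℝ,
      StrictAnti t → (∀ j, hermiteH N (t j) = 0) →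
      ∑ k : Fin N, ghWeight N (t k) * Real.exp ((t k) ^ 2)
        < C * (N : ℝ) ^ ((3 : ℝ) / 2) := by
  refine ⟨12, by norm_num, ?_⟩
  intro N hN t ht hz
  have hz' : ∀ j, (Hp N).eval (t j) = 0 := fun j => by
    rw [← hermiteH_eval]; exact hz j
  have hb := node_sq_bound hN t ht hz'
  have hterm : ∀ k : Fin N, ghWeight N (t k) * Real.exp ((t k)^2) ≤ 11 * Real.sqrt N :=
    fun k => per_term hN (hb k) (hz' k)
  have hNpos : (0:ℝ) < N := by exact_mod_cast hN
  have hsq : 0 < Real.sqrt N := Real.sqrt_pos.2 hNpos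
  have hsum : ∑ k : Fin N, ghWeight N (t k) * Real.exp ((t k) ^ 2)
      ≤ (N : ℝ) * (11 * Real.sqrt N) := by
    calc ∑ k : Fin N, ghWeight N (t k) * Real.exp ((t k) ^ 2)
        ≤ ∑ _k : Fin N, 11 * Real.sqrt N := Finset.sum_le_sum (fun k _ => hterm k)
      _ = (N : ℝ) * (11 * Real.sqrt N) := by
          rw [Finset.sum_const, Finset.card_univ, Fintype.card_fin, nsmul_eq_mul]
  have hr : (N:ℝ)^((3:ℝ)/2) = (N:ℝ) * Real.sqrt N := by
    rw [show (3:ℝ)/2 = 1 + 1/2 by norm_num, Real.rpow_add hNpos, Real.rpow_one,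
      ← Real.sqrt_eq_rpow]
  rw [hr]
  have hlt : (N : ℝ) * (11 * Real.sqrt N) < 12 * ((N:ℝ) * Real.sqrt N) := by
    nlinarith
  linarith
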